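/- Under the GT-SAGA setup, if 0 < α ≤ 1/(2L), then for every k ≥ 0, almost surely E[F(x̄^{k+1}) | F^k] ≤ F(x̄^k) − (α/2)‖∇F(x̄^k)‖² − (α/4)‖∇f̄(x^k)‖² + (αL²/n)‖x^k − Jx^k‖² + (α²L³/n)·t^k. -/

import Mathlib

open MeasureTheory ProbabilityTheory Finset Filter
open scoped ENNReal RealInnerProductSpace

noncomputable section

/-- The second largest singular value of a doubly stochastic matrix `w`, realized as the
operator norm of `w - (1/n) 𝟙ₙ 𝟙ₙᵀ` acting on `EuclideanSpace ℝ (Fin n)`. -/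
def secondSV {n : ℕ} (w : Matrix (Fin n) (Fin n) ℝ) : ℝ :=
  ‖LinearMap.toContinuousLinearMap
      (Matrix.toEuclideanLin (w - Matrix.of fun _ _ => (n : ℝ)⁻¹))‖

/-- The average `(1/n) ∑ᵢ vᵢ` of the blocks of a stacked vector `v ∈ ℝ^{np}`. -/
def blockAvg {n p : ℕ} (v : Fin n → EuclideanSpace ℝ (Fin p)) : EuclideanSpace ℝ (Fin p) :=
  (n : ℝ)⁻¹ • ∑ i, v i

/-- `‖v - J v‖²` for a stacked vector `v ∈ ℝ^{np}`, where `J = ((1/n) 𝟙ₙ 𝟙ₙᵀ) ⊗ Iₚ`. -/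
def consSq {n p : ℕ} (v : Fin n → EuclideanSpace ℝ (Fin p)) : ℝ :=
  ∑ i, ‖v i - blockAvg v‖ ^ 2

/-- `(W - J) v`, blockwise, where `W = w ⊗ Iₚ` and `J = ((1/n) 𝟙ₙ 𝟙ₙᵀ) ⊗ Iₚ`. -/
def WJapp {n p : ℕ} (w : Matrix (Fin n) (Fin n) ℝ) (v : Fin n → EuclideanSpace ℝ (Fin p)) :
    Fin n → EuclideanSpace ℝ (Fin p) :=
  fun i => (∑ r, w i r • v r) - blockAvg v

/-- The local batch function `fᵢ := (1/m) ∑ⱼ f_{i,j}`. -/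
def floc {n m p : ℕ} (f : Fin n → Fin m → EuclideanSpace ℝ (Fin p) → ℝ) (i : Fin n) :
    EuclideanSpace ℝ (Fin p) → ℝ :=
  fun u => (m : ℝ)⁻¹ * ∑ j, f i j u

/-- The global function `F := (1/n) ∑ᵢ fᵢ`. -/
def fglob {n m p : ℕ} (f : Fin n → Fin m → EuclideanSpace ℝ (Fin p) → ℝ) :
    EuclideanSpace ℝ (Fin p) → ℝ :=
  fun u => (n : ℝ)⁻¹ * ∑ i, floc f i u

/-- `F* := inf_x F(x)`. -/
def Fstar {n m p : ℕ} (f : Fin n → Fin m → EuclideanSpace ℝ (Fin p) → ℝ) : ℝ :=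
  ⨅ u, fglob f u

/-- `∇f̄(x) := (1/n) ∑ᵢ ∇fᵢ(xᵢ)`. -/
def gradfbar {n m p : ℕ} (f : Fin n → Fin m → EuclideanSpace ℝ (Fin p) → ℝ)
    (v : Fin n → EuclideanSpace ℝ (Fin p)) : EuclideanSpace ℝ (Fin p) :=
  (n : ℝ)⁻¹ • ∑ i, gradient (floc f i) (v i)

/-- The auxiliary quantity `t := (1/n) ∑ᵢ (1/m) ∑ⱼ ‖x̄ - z_{i,j}‖²`. -/
def tAux {n m p : ℕ} (xbar : EuclideanSpace ℝ (Fin p))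
    (z : Fin n → Fin m → EuclideanSpace ℝ (Fin p)) : ℝ :=
  (n : ℝ)⁻¹ * ∑ i, (m : ℝ)⁻¹ * ∑ j, ‖xbar - z i j‖ ^ 2

/-- The filtration `F^k := σ(τᵢᵗ, sᵢᵗ : i ∈ V, t ≤ k-1)`, with `F⁰` trivial. -/
def gtFilt {Ω : Type*} {n m : ℕ} (τ s : Fin n → ℕ → Ω → Fin m) (k : ℕ) :
    MeasurableSpace Ω :=
  ⨆ (i : Fin n) (t : ℕ) (_ : t < k),
    MeasurableSpace.comap (τ i t) ⊤ ⊔ MeasurableSpace.comap (s i t) ⊤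
/-!
Given `F^k`, the iterates `x^k, z^k` are fixed and, because `W` is column stochastic
(`∑ᵢ yᵢ^{k+1} = ∑ᵢ gᵢ^k`), `x̄^{k+1} = x̄^k - α ḡ^k`, where `ḡ^k` depends on the fresh
randomness only through the index vector `τ^k`. That vector is independent of `F^k` and uniform
on `(Fin m)^n`, so the conditional expectation is the plain average over all `m^n` index
choices. Averaging the descent lemma for the `L`-smooth `F`: the estimator `ḡ^k` is unbiased
for `∇f̄(x^k)`, and since the per-node noises are independent and centred its variance is
`n⁻²` times the sum of the node variances, each bounded by the SAGA memory gap
`2L²(‖xᵢ - x̄‖² + ‖x̄ - z_{ij}‖²)`. Polarising `⟪∇F(x̄), ∇f̄(x)⟫` with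
`‖∇F(x̄) - ∇f̄(x)‖² ≤ (L²/n)‖x - Jx‖²` and using `αL ≤ 1/2` gives the claim.
-/

section Smooth

variable {E : Type*} [NormedAddCommGroup E] [InnerProductSpace ℝ E] [CompleteSpace E]

theorem abs_sub_sub_inner_gradient_le {F : E → ℝ} {K : NNReal} (hF : Differentiable ℝ F)
    (hlip : LipschitzWith K (gradient F)) (a b : E) :
    |F b - F a - ⟪gradient F a, b - a⟫| ≤ K / 2 * ‖b - a‖ ^ 2 := by
  set c := b - a
  have hline : ∀ θ : ℝ, HasDerivAt (fun θ : ℝ => F (a + θ • c) - θ * ⟪gradient F a, c⟫)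
      ⟪gradient F (a + θ • c) - gradient F a, c⟫ θ := by
    intro θ
    have hcurve : HasDerivAt (fun θ : ℝ => a + θ • c) c θ := by
      simpa using ((hasDerivAt_id θ).smul_const c).const_add a
    have hF' : HasDerivAt (fun θ : ℝ => F (a + θ • c)) ⟪gradient F (a + θ • c), c⟫ θ := by
      rw [inner_gradient_left]
      exact (hF _).hasFDerivAt.comp_hasDerivAt θ hcurve
    rw [inner_sub_left]
    simpa using hF'.fun_sub ((hasDerivAt_id θ).mul_const ⟪gradient F a, c⟫)
  have hcont : Continuous fun θ : ℝ => ⟪gradient F (a + θ • c) - gradient F a, c⟫ :=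
    ((hlip.continuous.comp (by fun_prop)).sub continuous_const).inner continuous_const
  have hint : F b - F a - ⟪gradient F a, c⟫
      = ∫ θ in (0 : ℝ)..1, ⟪gradient F (a + θ • c) - gradient F a, c⟫ := by
    rw [intervalIntegral.integral_eq_sub_of_hasDerivAt (fun θ _ => hline θ)
      (hcont.intervalIntegrable 0 1)]
    simp [c]
    ring
  have hbound : ∀ θ ∈ Set.Ioc (0 : ℝ) 1,
      ‖⟪gradient F (a + θ • c) - gradient F a, c⟫‖ ≤ K * ‖c‖ ^ 2 * θ := by
    intro θ hθ
    calc ‖⟪gradient F (a + θ • c) - gradient F a, c⟫‖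
        ≤ ‖gradient F (a + θ • c) - gradient F a‖ * ‖c‖ := norm_inner_le_norm _ _
      _ ≤ K * ‖(a + θ • c) - a‖ * ‖c‖ := by
          gcongr
          exact hlip.norm_sub_le _ _
      _ = K * ‖c‖ ^ 2 * θ := by
          rw [add_sub_cancel_left, norm_smul, Real.norm_of_nonneg hθ.1.le]
          ring
  rw [hint, ← Real.norm_eq_abs]
  refine (intervalIntegral.norm_integral_le_of_norm_le zero_le_one
    (Eventually.of_forall hbound) ((continuous_const_mul _).intervalIntegrable _ _)).trans_eq ?_
  rw [intervalIntegral.integral_const_mul, integral_id]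
  ring

theorem gradient_const_mul_sum {ι : Type*} [Fintype ι] (c : ℝ) {g : ι → E → ℝ}
    (hg : ∀ i, Differentiable ℝ (g i)) (x : E) :
    gradient (fun u => c * ∑ i, g i u) x = c • ∑ i, gradient (g i) x := by
  have hder : HasFDerivAt (fun u => c * ∑ i, g i u) (c • ∑ i, fderiv ℝ (g i) x) x := by
    simpa using (HasFDerivAt.fun_sum fun i _ => (hg i x).hasFDerivAt).const_mul c
  simp [gradient, hder.fderiv, map_sum]

theorem lipschitzWith_gradient_const_mul_sum {ι : Type*} [Fintype ι] {K : NNReal} {c : ℝ}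
    (hc : 0 ≤ c) (hcard : c * Fintype.card ι ≤ 1) {g : ι → E → ℝ}
    (hg : ∀ i, Differentiable ℝ (g i)) (hlip : ∀ i, LipschitzWith K (gradient (g i))) :
    LipschitzWith K (gradient fun u => c * ∑ i, g i u) := by
  rw [funext (gradient_const_mul_sum c hg)]
  refine LipschitzWith.of_dist_le_mul fun x y => ?_
  rw [dist_eq_norm, ← smul_sub, ← Finset.sum_sub_distrib, norm_smul, Real.norm_of_nonneg hc]
  calc c * ‖∑ i, (gradient (g i) x - gradient (g i) y)‖
      ≤ c * ∑ _i : ι, K * dist x y := by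
        gcongr
        refine (norm_sum_le _ _).trans (Finset.sum_le_sum fun i _ => ?_)
        rw [← dist_eq_norm]
        exact (hlip i).dist_le_mul x y
    _ = c * Fintype.card ι * (K * dist x y) := by simp [mul_assoc]
    _ ≤ K * dist x y := mul_le_of_le_one_left (by positivity) hcard

theorem image_le_add_inner_gradient_add {F : E → ℝ} {K : NNReal} (hF : Differentiable ℝ F)
    (hlip : LipschitzWith K (gradient F)) (a b : E) :
    F b ≤ F a + ⟪gradient F a, b - a⟫ + K / 2 * ‖b - a‖ ^ 2 := by
  linarith [(abs_le.1 (abs_sub_sub_inner_gradient_le hF hlip a b)).2]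

theorem mean_image_sub_smul_le {T : Type*} [Fintype T] [Nonempty T] {F : E → ℝ} {K : NNReal}
    (hF : Differentiable ℝ F) (hlip : LipschitzWith K (gradient F)) (a d : E) (α : ℝ)
    (G : T → E) (hG : ∑ t, (G t - d) = 0) :
    (Fintype.card T : ℝ)⁻¹ * ∑ t, F (a - α • G t)
      ≤ F a - α * ⟪gradient F a, d⟫
        + K / 2 * α ^ 2 * (‖d‖ ^ 2 + (Fintype.card T : ℝ)⁻¹ * ∑ t, ‖G t - d‖ ^ 2) := by
  have hcard : (Fintype.card T : ℝ) ≠ 0 := by positivity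
  have hstep : ∀ t, F (a - α • G t) ≤ F a - α * ⟪gradient F a, d⟫
      - α * ⟪gradient F a, G t - d⟫
        + K / 2 * α ^ 2 * (‖d‖ ^ 2 + 2 * ⟪d, G t - d⟫ + ‖G t - d‖ ^ 2) := by
    intro t
    have h := image_le_add_inner_gradient_add hF hlip a (a - α • G t)
    have hnorm : ‖G t‖ ^ 2 = ‖d‖ ^ 2 + 2 * ⟪d, G t - d⟫ + ‖G t - d‖ ^ 2 := by
      rw [← norm_add_sq_real, add_sub_cancel]
    have hinner : ⟪gradient F a, G t⟫ = ⟪gradient F a, d⟫ + ⟪gradient F a, G t - d⟫ := by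
      rw [← inner_add_right, add_sub_cancel]
    rw [sub_sub_cancel_left, inner_neg_right, norm_neg, inner_smul_right, norm_smul, mul_pow,
      Real.norm_eq_abs, sq_abs, hnorm, hinner] at h
    linarith
  have hinner : ∀ c : E, ∑ t, ⟪c, G t - d⟫ = 0 := fun c => by rw [← inner_sum, hG, inner_zero_right]
  have hsum := Finset.sum_le_sum fun t (_ : t ∈ Finset.univ) => hstep t
  simp only [Finset.sum_add_distrib, Finset.sum_sub_distrib, ← Finset.mul_sum, Finset.sum_const,
    Finset.card_univ, nsmul_eq_mul, hinner] at hsum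
  have := mul_le_mul_of_nonneg_left hsum (inv_nonneg.2 (Nat.cast_nonneg (Fintype.card T)))
  field_simp at this ⊢
  linarith

end Smooth

section Integrability

variable {Ω : Type*} [MeasurableSpace Ω] {P : Measure Ω} [IsFiniteMeasure P]

theorem LipschitzWith.memLp_comp_of_isFiniteMeasure {E F : Type*} [NormedAddCommGroup E]
    [NormedAddCommGroup F] {K : NNReal} {g : E → F} (hg : LipschitzWith K g)
    {V : Ω → E} {q : ℝ≥0∞} (hV : MemLp V q P) : MemLp (fun ω => g (V ω)) q P := by
  have hg0 : LipschitzWith K fun a => g a - g 0 :=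
    LipschitzWith.of_dist_le_mul fun a b => by rw [dist_sub_right]; exact hg.dist_le_mul a b
  convert (hg0.comp_memLp (sub_self _) hV).add (memLp_const (g 0)) using 1
  ext ω
  simp

variable {E : Type*} [NormedAddCommGroup E] [InnerProductSpace ℝ E] [CompleteSpace E]

theorem integrable_comp_of_lipschitzWith_gradient {F : E → ℝ} {K : NNReal}
    (hF : Differentiable ℝ F) (hlip : LipschitzWith K (gradient F)) {V : Ω → E}
    (hV : MemLp V 2 P) : Integrable (fun ω => F (V ω)) P := by
  have hbound : ∀ b : E, ‖F b‖ ≤ |F 0| + ‖gradient F 0‖ * ‖b‖ + K / 2 * ‖b‖ ^ 2 := by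
    intro b
    have h := abs_sub_sub_inner_gradient_le hF hlip 0 b
    rw [sub_zero] at h
    have hinner := abs_real_inner_le_norm (gradient F 0) b
    rw [Real.norm_eq_abs]
    linarith [abs_sub_abs_le_abs_sub (F b) (F 0),
      abs_sub_abs_le_abs_sub (F b - F 0) ⟪gradient F 0, b⟫]
  have hnorm : MemLp (fun ω => ‖V ω‖) 2 P := hV.norm
  refine Integrable.mono' ?_ (hF.continuous.comp_aestronglyMeasurable hV.1)
    (Eventually.of_forall fun ω => hbound (V ω))
  exact ((integrable_const _).add ((hnorm.integrable one_le_two).const_mul _)).add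
    (hnorm.integrable_sq.const_mul _)

end Integrability

section Averages

variable {κ : Type*} [Fintype κ]

theorem norm_sum_sq_le_card_mul_sum_norm_sq {E : Type*} [SeminormedAddCommGroup E] (a : κ → E) :
    ‖∑ j, a j‖ ^ 2 ≤ Fintype.card κ * ∑ j, ‖a j‖ ^ 2 := by
  calc ‖∑ j, a j‖ ^ 2 ≤ (∑ j, ‖a j‖) ^ 2 := by gcongr; exact norm_sum_le _ _
    _ ≤ Fintype.card κ * ∑ j, ‖a j‖ ^ 2 := by
        simpa using sq_sum_le_card_mul_sum_sq (s := Finset.univ) (f := fun j => ‖a j‖)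

variable {E : Type*} [NormedAddCommGroup E] [InnerProductSpace ℝ E]

theorem sum_sub_inv_card_smul_sum (X : κ → E) :
    ∑ j, (X j - (Fintype.card κ : ℝ)⁻¹ • ∑ j', X j') = 0 := by
  rcases isEmpty_or_nonempty κ with hκ | hκ
  · simp
  rw [Finset.sum_sub_distrib, Finset.sum_const, Finset.card_univ, ← Nat.cast_smul_eq_nsmul ℝ,
    smul_inv_smul₀ (by positivity), sub_self]

theorem sum_norm_sub_inv_card_smul_sum_sq_le (X : κ → E) :
    ∑ j, ‖X j - (Fintype.card κ : ℝ)⁻¹ • ∑ j', X j'‖ ^ 2 ≤ ∑ j, ‖X j‖ ^ 2 := by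
  set c := (Fintype.card κ : ℝ)⁻¹ • ∑ j', X j'
  have hsum : ∑ j, (X j - c) = 0 := sum_sub_inv_card_smul_sum X
  have hexpand : ∀ j, ‖X j‖ ^ 2 = ‖X j - c‖ ^ 2 + 2 * ⟪X j - c, c⟫ + ‖c‖ ^ 2 := fun j => by
    rw [← norm_add_sq_real, sub_add_cancel]
  simp only [hexpand, Finset.sum_add_distrib, ← Finset.mul_sum, ← sum_inner, hsum,
    inner_zero_left, mul_zero, add_zero]
  exact le_add_of_nonneg_right (Finset.sum_nonneg fun _ _ => by positivity)

end Averages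

theorem LipschitzWith.norm_sub_sq_le {E F : Type*} [SeminormedAddCommGroup E]
    [SeminormedAddCommGroup F] {K : NNReal} {g : E → F} (hg : LipschitzWith K g) (a b c : E) :
    ‖g a - g b‖ ^ 2 ≤ 2 * K ^ 2 * (‖a - c‖ ^ 2 + ‖c - b‖ ^ 2) := by
  have h : ‖g a - g b‖ ≤ K * (‖a - c‖ + ‖c - b‖) :=
    (hg.norm_sub_le a b).trans (by gcongr; exact norm_sub_le_norm_sub_add_norm_sub a c b)
  have h0 : 0 ≤ ‖g a - g b‖ := norm_nonneg _
  nlinarith [sq_nonneg (‖a - c‖ - ‖c - b‖), mul_le_mul h h h0 (by positivity)]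

section IndexChoice

variable {ι κ : Type*} [Fintype ι] [DecidableEq ι] [Fintype κ]

theorem sum_pi_eq_sum_sum_funSplitAt {M : Type*} [AddCommMonoid M] (i : ι)
    (Φ : κ → ({j // j ≠ i} → κ) → M) :
    ∑ t : ι → κ, Φ (t i) (fun j => t j) = ∑ a, ∑ r, Φ a r := by
  rw [← Fintype.sum_prod_type']
  exact Fintype.sum_equiv (Equiv.funSplitAt i κ) _ _ fun t => rfl

theorem card_smul_sum_pi_apply {M : Type*} [AddCommMonoid M] (i : ι) (φ : κ → M) :
    Fintype.card κ • ∑ t : ι → κ, φ (t i) = Fintype.card (ι → κ) • ∑ a, φ a := by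
  rw [sum_pi_eq_sum_sum_funSplitAt i fun a _ => φ a, Fintype.card_congr (Equiv.funSplitAt i κ),
    Fintype.card_prod, mul_smul]
  simp [Finset.smul_sum]

theorem sum_pi_apply_eq_zero {M : Type*} [AddCommMonoid M] (i : ι) {φ : κ → M}
    (hφ : ∑ a, φ a = 0) : ∑ t : ι → κ, φ (t i) = 0 := by
  rw [sum_pi_eq_sum_sum_funSplitAt i fun a _ => φ a, Finset.sum_comm]
  simp [hφ]

variable {E : Type*} [NormedAddCommGroup E] [InnerProductSpace ℝ E]

theorem sum_pi_inner_apply_eq_zero {i i' : ι} (hi : i' ≠ i) {Y : κ → E} (hY : ∑ a, Y a = 0)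
    (Z : κ → E) : ∑ t : ι → κ, ⟪Y (t i), Z (t i')⟫ = 0 := by
  rw [sum_pi_eq_sum_sum_funSplitAt i fun a r => ⟪Y a, Z (r ⟨i', hi⟩)⟫, Finset.sum_comm]
  simp [← sum_inner, hY]

theorem sum_pi_norm_sum_apply_sq {Y : ι → κ → E} (hY : ∀ i, ∑ a, Y i a = 0) :
    ∑ t : ι → κ, ‖∑ i, Y i (t i)‖ ^ 2 = ∑ i, ∑ t : ι → κ, ‖Y i (t i)‖ ^ 2 := by
  have hcross : ∀ i i', i' ≠ i → ∑ t : ι → κ, ⟪Y i (t i), Y i' (t i')⟫ = 0 :=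
    fun i i' hi => sum_pi_inner_apply_eq_zero hi (hY i) (Y i')
  simp_rw [← real_inner_self_eq_norm_sq, sum_inner, inner_sum]
  rw [Finset.sum_comm]
  refine Finset.sum_congr rfl fun i _ => ?_
  rw [Finset.sum_comm, Finset.sum_eq_single i (fun i' _ hi => hcross i i' hi) (by simp)]

theorem card_mul_sum_pi_norm_sum_apply_sq {Y : ι → κ → E} (hY : ∀ i, ∑ a, Y i a = 0) :
    Fintype.card κ * ∑ t : ι → κ, ‖∑ i, Y i (t i)‖ ^ 2
      = Fintype.card (ι → κ) * ∑ i, ∑ a, ‖Y i a‖ ^ 2 := by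
  rw [sum_pi_norm_sum_apply_sq hY, Finset.mul_sum, Finset.mul_sum]
  refine Finset.sum_congr rfl fun i _ => ?_
  simpa [nsmul_eq_mul] using card_smul_sum_pi_apply i fun a => ‖Y i a‖ ^ 2

end IndexChoice

section GTSAGA

variable {n m p : ℕ} {f : Fin n → Fin m → EuclideanSpace ℝ (Fin p) → ℝ} {K : NNReal}

theorem differentiable_floc (hdiff : ∀ i j, Differentiable ℝ (f i j)) (i : Fin n) :
    Differentiable ℝ (floc f i) :=
  (Differentiable.fun_sum fun j _ => hdiff i j).const_mul _

theorem differentiable_fglob (hdiff : ∀ i j, Differentiable ℝ (f i j)) :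
    Differentiable ℝ (fglob f) :=
  (Differentiable.fun_sum fun i _ => differentiable_floc hdiff i).const_mul _

theorem gradient_floc (hdiff : ∀ i j, Differentiable ℝ (f i j)) (i : Fin n)
    (x : EuclideanSpace ℝ (Fin p)) :
    gradient (floc f i) x = (m : ℝ)⁻¹ • ∑ j, gradient (f i j) x :=
  gradient_const_mul_sum _ (hdiff i) x

theorem gradient_fglob (hdiff : ∀ i j, Differentiable ℝ (f i j)) (x : EuclideanSpace ℝ (Fin p)) :
    gradient (fglob f) x = (n : ℝ)⁻¹ • ∑ i, gradient (floc f i) x :=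
  gradient_const_mul_sum _ (differentiable_floc hdiff) x

theorem inv_natCast_mul_card_fin_le_one (k : ℕ) : (k : ℝ)⁻¹ * Fintype.card (Fin k) ≤ 1 := by
  rw [Fintype.card_fin]
  rcases eq_or_ne (k : ℝ) 0 with hk | hk
  · simp [hk]
  · rw [inv_mul_cancel₀ hk]

theorem lipschitzWith_gradient_floc (hdiff : ∀ i j, Differentiable ℝ (f i j))
    (hlip : ∀ i j, LipschitzWith K (gradient (f i j))) (i : Fin n) :
    LipschitzWith K (gradient (floc f i)) :=
  lipschitzWith_gradient_const_mul_sum (by positivity) (inv_natCast_mul_card_fin_le_one m)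
    (hdiff i) (hlip i)

theorem lipschitzWith_gradient_fglob (hdiff : ∀ i j, Differentiable ℝ (f i j))
    (hlip : ∀ i j, LipschitzWith K (gradient (f i j))) :
    LipschitzWith K (gradient (fglob f)) :=
  lipschitzWith_gradient_const_mul_sum (by positivity) (inv_natCast_mul_card_fin_le_one n)
    (differentiable_floc hdiff) (lipschitzWith_gradient_floc hdiff hlip)

/-- The SAGA estimator `gᵢ^k` when `x^k = u`, `z^k = v` and node `i` samples `τᵢ^k = j`. -/
def sagaGrad (f : Fin n → Fin m → EuclideanSpace ℝ (Fin p) → ℝ)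
    (u : Fin n → EuclideanSpace ℝ (Fin p)) (v : Fin n → Fin m → EuclideanSpace ℝ (Fin p))
    (i : Fin n) (j : Fin m) : EuclideanSpace ℝ (Fin p) :=
  gradient (f i j) (u i) - gradient (f i j) (v i j) + (m : ℝ)⁻¹ • ∑ j', gradient (f i j') (v i j')

def sagaGradAvg (f : Fin n → Fin m → EuclideanSpace ℝ (Fin p) → ℝ)
    (u : Fin n → EuclideanSpace ℝ (Fin p)) (v : Fin n → Fin m → EuclideanSpace ℝ (Fin p))
    (t : Fin n → Fin m) : EuclideanSpace ℝ (Fin p) :=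
  (n : ℝ)⁻¹ • ∑ i, sagaGrad f u v i (t i)

def gradGap (f : Fin n → Fin m → EuclideanSpace ℝ (Fin p) → ℝ)
    (u : Fin n → EuclideanSpace ℝ (Fin p)) (v : Fin n → Fin m → EuclideanSpace ℝ (Fin p))
    (i : Fin n) (j : Fin m) : EuclideanSpace ℝ (Fin p) :=
  gradient (f i j) (u i) - gradient (f i j) (v i j)

variable (u : Fin n → EuclideanSpace ℝ (Fin p)) (v : Fin n → Fin m → EuclideanSpace ℝ (Fin p))

theorem sagaGradAvg_sub_gradfbar (hdiff : ∀ i j, Differentiable ℝ (f i j)) (t : Fin n → Fin m) :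
    sagaGradAvg f u v t - gradfbar f u
      = (n : ℝ)⁻¹ • ∑ i, (gradGap f u v i (t i) - (m : ℝ)⁻¹ • ∑ j, gradGap f u v i j) := by
  simp only [sagaGradAvg, sagaGrad, gradfbar, gradGap, gradient_floc hdiff, ← smul_sub,
    ← Finset.sum_sub_distrib]
  congr 1
  refine Finset.sum_congr rfl fun i _ => ?_
  rw [Finset.sum_sub_distrib, smul_sub]
  abel

theorem sum_sagaGradAvg_sub_gradfbar (hdiff : ∀ i j, Differentiable ℝ (f i j)) :
    ∑ t : Fin n → Fin m, (sagaGradAvg f u v t - gradfbar f u) = 0 := by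
  have hcentered : ∀ i, ∑ j, (gradGap f u v i j - (m : ℝ)⁻¹ • ∑ j', gradGap f u v i j') = 0 :=
    fun i => by simpa using sum_sub_inv_card_smul_sum (gradGap f u v i)
  simp only [sagaGradAvg_sub_gradfbar u v hdiff, ← Finset.smul_sum]
  rw [Finset.sum_comm]
  simp [sum_pi_apply_eq_zero _ (hcentered _)]

theorem sum_sum_norm_gradGap_sq_le (hlip : ∀ i j, LipschitzWith K (gradient (f i j))) :
    ∑ i, ∑ j, ‖gradGap f u v i j‖ ^ 2
      ≤ 2 * K ^ 2 * (m * consSq u + ∑ i, ∑ j, ‖blockAvg u - v i j‖ ^ 2) := by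
  calc ∑ i, ∑ j, ‖gradGap f u v i j‖ ^ 2
      ≤ ∑ i, ∑ j : Fin m, 2 * K ^ 2 * (‖u i - blockAvg u‖ ^ 2 + ‖blockAvg u - v i j‖ ^ 2) :=
        Finset.sum_le_sum fun i _ => Finset.sum_le_sum fun j _ => (hlip i j).norm_sub_sq_le _ _ _
    _ = 2 * K ^ 2 * (m * consSq u + ∑ i, ∑ j, ‖blockAvg u - v i j‖ ^ 2) := by
        simp only [consSq, ← Finset.mul_sum, Finset.sum_add_distrib, Finset.sum_const,
          Finset.card_univ, Fintype.card_fin, nsmul_eq_mul]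

theorem mean_norm_sagaGradAvg_sub_gradfbar_sq_le (hm : 0 < m)
    (hdiff : ∀ i j, Differentiable ℝ (f i j)) (hlip : ∀ i j, LipschitzWith K (gradient (f i j))) :
    (Fintype.card (Fin n → Fin m) : ℝ)⁻¹ * ∑ t, ‖sagaGradAvg f u v t - gradfbar f u‖ ^ 2
      ≤ 2 * K ^ 2 / n ^ 2 * consSq u + 2 * K ^ 2 / n * tAux (blockAvg u) v := by
  set Y : Fin n → Fin m → EuclideanSpace ℝ (Fin p) :=
    fun i j => gradGap f u v i j - (m : ℝ)⁻¹ • ∑ j', gradGap f u v i j'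
  have hY : ∀ i, ∑ j, Y i j = 0 := fun i => by
    have h := sum_sub_inv_card_smul_sum (gradGap f u v i)
    rwa [Fintype.card_fin] at h
  have hYle : ∀ i, ∑ j, ‖Y i j‖ ^ 2 ≤ ∑ j, ‖gradGap f u v i j‖ ^ 2 := fun i => by
    have h := sum_norm_sub_inv_card_smul_sum_sq_le (gradGap f u v i)
    rwa [Fintype.card_fin] at h
  have hm0 : (m : ℝ) ≠ 0 := by positivity
  have hcard : (Fintype.card (Fin n → Fin m) : ℝ) ≠ 0 := by
    have : Nonempty (Fin m) := ⟨⟨0, hm⟩⟩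
    positivity
  have hpyth := card_mul_sum_pi_norm_sum_apply_sq hY
  rw [Fintype.card_fin] at hpyth
  have hS : ∀ t, sagaGradAvg f u v t - gradfbar f u = (n : ℝ)⁻¹ • ∑ i, Y i (t i) :=
    sagaGradAvg_sub_gradfbar u v hdiff
  have hmean : (Fintype.card (Fin n → Fin m) : ℝ)⁻¹
        * ∑ t, ‖sagaGradAvg f u v t - gradfbar f u‖ ^ 2
      = (n : ℝ)⁻¹ ^ 2 * (m : ℝ)⁻¹ * ∑ i, ∑ j, ‖Y i j‖ ^ 2 := by
    simp only [hS, norm_smul, mul_pow, Real.norm_eq_abs, sq_abs, ← Finset.mul_sum]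
    field_simp
    linear_combination (n : ℝ)⁻¹ ^ 2 * hpyth
  rw [hmean]
  calc (n : ℝ)⁻¹ ^ 2 * (m : ℝ)⁻¹ * ∑ i, ∑ j, ‖Y i j‖ ^ 2
      ≤ (n : ℝ)⁻¹ ^ 2 * (m : ℝ)⁻¹ * (2 * K ^ 2 * (m * consSq u
          + ∑ i, ∑ j, ‖blockAvg u - v i j‖ ^ 2)) := by
        gcongr
        exact (Finset.sum_le_sum fun i _ => hYle i).trans (sum_sum_norm_gradGap_sq_le u v hlip)
    _ = 2 * K ^ 2 / n ^ 2 * consSq u + 2 * K ^ 2 / n * tAux (blockAvg u) v := by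
        rw [tAux, ← Finset.mul_sum]
        field_simp

theorem norm_gradient_fglob_sub_gradfbar_sq_le (hdiff : ∀ i j, Differentiable ℝ (f i j))
    (hlip : ∀ i j, LipschitzWith K (gradient (f i j))) :
    ‖gradient (fglob f) (blockAvg u) - gradfbar f u‖ ^ 2 ≤ K ^ 2 / n * consSq u := by
  rw [gradient_fglob hdiff, gradfbar, ← smul_sub, ← Finset.sum_sub_distrib, norm_smul, mul_pow,
    Real.norm_eq_abs, sq_abs]
  calc (n : ℝ)⁻¹ ^ 2 * ‖∑ i, (gradient (floc f i) (blockAvg u) - gradient (floc f i) (u i))‖ ^ 2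
      ≤ (n : ℝ)⁻¹ ^ 2 * (n * ∑ i, K ^ 2 * ‖u i - blockAvg u‖ ^ 2) := by
        gcongr
        refine (norm_sum_sq_le_card_mul_sum_norm_sq _).trans ?_
        rw [Fintype.card_fin]
        gcongr with i
        have h := (lipschitzWith_gradient_floc hdiff hlip i).norm_sub_le (blockAvg u) (u i)
        rw [norm_sub_rev (blockAvg u)] at h
        calc _ ≤ (K * ‖u i - blockAvg u‖) ^ 2 := by gcongr
          _ = _ := mul_pow _ _ _
    _ ≤ K ^ 2 / n * consSq u := by
        rw [consSq, ← Finset.mul_sum]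
        rcases eq_or_ne (n : ℝ) 0 with hn | hn
        · simp [hn]
        · field_simp
          rfl

theorem mean_fglob_sub_smul_sagaGradAvg_le (hn : 1 ≤ n) (hm : 0 < m)
    (hdiff : ∀ i j, Differentiable ℝ (f i j)) (hlip : ∀ i j, LipschitzWith K (gradient (f i j)))
    {α : ℝ} (hα : 0 ≤ α) (hαK : 2 * α * K ≤ 1) :
    ((m : ℝ) ^ n)⁻¹ * ∑ t, fglob f (blockAvg u - α • sagaGradAvg f u v t)
      ≤ fglob f (blockAvg u)
        - α / 2 * ‖gradient (fglob f) (blockAvg u)‖ ^ 2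
        - α / 4 * ‖gradfbar f u‖ ^ 2
        + α * K ^ 2 / n * consSq u
        + α ^ 2 * K ^ 3 / n * tAux (blockAvg u) v := by
  have : Nonempty (Fin m) := ⟨⟨0, hm⟩⟩
  have hcard : (Fintype.card (Fin n → Fin m) : ℝ) = (m : ℝ) ^ n := by simp
  have hdescent := mean_image_sub_smul_le (differentiable_fglob hdiff)
    (lipschitzWith_gradient_fglob hdiff hlip) (blockAvg u) (gradfbar f u) α
    (sagaGradAvg f u v) (sum_sagaGradAvg_sub_gradfbar u v hdiff)
  have hvar := mean_norm_sagaGradAvg_sub_gradfbar_sq_le u v hm hdiff hlip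
  rw [hcard] at hdescent hvar
  set gF := gradient (fglob f) (blockAvg u)
  set d := gradfbar f u
  set C := consSq u
  set T := tAux (blockAvg u) v
  have hgap : ‖gF - d‖ ^ 2 ≤ K ^ 2 / n * C := norm_gradient_fglob_sub_gradfbar_sq_le u hdiff hlip
  have hpolar : ⟪gF, d⟫ = (‖gF‖ ^ 2 + ‖d‖ ^ 2 - ‖gF - d‖ ^ 2) / 2 := by
    rw [norm_sub_sq_real]; ring
  have hC : 0 ≤ C := Finset.sum_nonneg fun _ _ => sq_nonneg _
  have hn' : (1 : ℝ) ≤ n := by exact_mod_cast hn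
  have hαKn : 2 * α * K / n ≤ 1 := (div_le_self (by positivity) hn').trans hαK
  have h1 := mul_le_mul_of_nonneg_left hgap (by positivity : 0 ≤ α / 2)
  have h2 := mul_le_mul_of_nonneg_left hvar (by positivity : 0 ≤ (K : ℝ) / 2 * α ^ 2)
  have h3 : 0 ≤ α * (1 - 2 * α * K) * ‖d‖ ^ 2 := by
    have := sub_nonneg.2 hαK
    positivity
  have h4 : α ^ 2 * K ^ 3 / n ^ 2 * C ≤ α * K ^ 2 / n * C / 2 := by
    have h : α ^ 2 * K ^ 3 / n ^ 2 * C = 2 * α * K / n * (α * K ^ 2 / n * C) / 2 := by ring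
    have := mul_le_of_le_one_left (by positivity : 0 ≤ α * K ^ 2 / n * C) hαKn
    linarith
  rw [hpolar] at hdescent
  ring_nf at hdescent h1 h2 h3 h4 ⊢
  linarith

end GTSAGA

section CondExp

variable {Ω β : Type*} [mΩ : MeasurableSpace Ω] {P : Measure Ω} [IsFiniteMeasure P] [Fintype β]

theorem condExp_apply_indep_eq_sum {m mT : MeasurableSpace Ω} (hm : m ≤ mΩ) (hmT : mT ≤ mΩ)
    (hindep : Indep mT m P) {T : Ω → β} (hT : ∀ b, MeasurableSet[mT] (T ⁻¹' {b}))
    {Φ : β → Ω → ℝ} (hΦ : ∀ b, StronglyMeasurable[m] (Φ b)) (hint : ∀ b, Integrable (Φ b) P) :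
    P[fun ω => Φ (T ω) ω | m] =ᵐ[P] fun ω => ∑ b, P.real (T ⁻¹' {b}) * Φ b ω := by
  classical
  set χ : β → Ω → ℝ := fun b => (T ⁻¹' {b}).indicator 1
  have hχ : ∀ b, StronglyMeasurable[mT] (χ b) := fun b =>
    stronglyMeasurable_const.indicator (hT b)
  have hχint : ∀ b, Integrable (χ b) P := fun b => (integrable_const 1).indicator (hmT _ (hT b))
  have hprod : ∀ b, Integrable (Φ b * χ b) P := fun b => by
    have h : Φ b * χ b = (T ⁻¹' {b}).indicator (Φ b) := by
      ext ω
      simp [χ, Set.indicator_apply]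
    rw [h]
    exact (hint b).indicator (hmT _ (hT b))
  have hsplit : (fun ω => Φ (T ω) ω) = ∑ b, Φ b * χ b := by
    ext ω
    simp [χ, Set.indicator_apply]
  have hterm : ∀ b, P[Φ b * χ b | m] =ᵐ[P] fun ω => P.real (T ⁻¹' {b}) * Φ b ω := by
    intro b
    filter_upwards [condExp_mul_of_stronglyMeasurable_left (hΦ b) (hprod b) (hχint b),
      condExp_indep_eq hmT hm (hχ b) hindep] with ω h1 h2
    rw [h1, Pi.mul_apply, h2, integral_indicator_one (hmT _ (hT b)), mul_comm]
  rw [hsplit]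
  filter_upwards [condExp_finsetSum (fun b _ => hprod b) m, ae_all_iff.2 hterm] with ω h1 h2
  rw [h1, Finset.sum_apply]
  exact Finset.sum_congr rfl fun b _ => h2 b

end CondExp

section Filtration

variable {Ω : Type*} {n m : ℕ} (τ s : Fin n → ℕ → Ω → Fin m)

theorem gtFilt_le [mΩ : MeasurableSpace Ω] (hτ : ∀ i k, Measurable (τ i k))
    (hs : ∀ i k, Measurable (s i k)) (k : ℕ) : gtFilt τ s k ≤ mΩ :=
  iSup_le fun i => iSup_le fun t => iSup_le fun _ =>
    sup_le (hτ i t).comap_le (hs i t).comap_le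

theorem gtFilt_mono {k k' : ℕ} (h : k ≤ k') : gtFilt τ s k ≤ gtFilt τ s k' :=
  iSup_mono fun _ => iSup_mono fun _ => iSup_le fun ht =>
    le_iSup_of_le (ht.trans_le h) le_rfl

theorem comap_tau_le_gtFilt {t k : ℕ} (ht : t < k) (i : Fin n) :
    MeasurableSpace.comap (τ i t) ⊤ ≤ gtFilt τ s k :=
  le_sup_left.trans (le_iSup_of_le i (le_iSup_of_le t (le_iSup_of_le ht le_rfl)))

theorem comap_s_le_gtFilt {t k : ℕ} (ht : t < k) (i : Fin n) :
    MeasurableSpace.comap (s i t) ⊤ ≤ gtFilt τ s k :=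
  le_sup_right.trans (le_iSup_of_le i (le_iSup_of_le t (le_iSup_of_le ht le_rfl)))

variable [mΩ : MeasurableSpace Ω] {P : Measure Ω}

theorem indep_iSup_comap_tau_gtFilt (hτ : ∀ i k, Measurable (τ i k))
    (hs : ∀ i k, Measurable (s i k))
    (hindep : iIndepFun
      (fun (q : Fin n × ℕ × Bool) ω => if q.2.2 then τ q.1 q.2.1 ω else s q.1 q.2.1 ω) P)
    (k : ℕ) : Indep (⨆ i, MeasurableSpace.comap (τ i k) ⊤) (gtFilt τ s k) P := by
  set ξ := fun (q : Fin n × ℕ × Bool) ω => if q.2.2 then τ q.1 q.2.1 ω else s q.1 q.2.1 ω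
  have hξ_le : ∀ q, MeasurableSpace.comap (ξ q) ⊤ ≤ mΩ := by
    rintro ⟨i, t, _ | _⟩
    exacts [(hs i t).comap_le, (hτ i t).comap_le]
  have h := indep_biSup_compl hξ_le hindep.iIndep {q | q.2.1 = k ∧ q.2.2 = true}
  refine indep_of_indep_of_le_right (indep_of_indep_of_le_left h ?_) ?_
  · exact iSup_le fun i => le_iSup₂_of_le (i, k, true) ⟨rfl, rfl⟩ le_rfl
  · refine iSup_le fun i => iSup_le fun t => iSup_le fun ht => sup_le ?_ ?_
    · exact le_iSup₂_of_le (i, t, true) (fun h => ht.ne h.1) le_rfl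
    · exact le_iSup₂_of_le (i, t, false) (fun h => Bool.false_ne_true h.2) le_rfl

theorem measure_tau_preimage_singleton (hindep : iIndepFun
      (fun (q : Fin n × ℕ × Bool) ω => if q.2.2 then τ q.1 q.2.1 ω else s q.1 q.2.1 ω) P)
    (hτunif : ∀ i k j, P {ω | τ i k ω = j} = (m : ℝ≥0∞)⁻¹) (k : ℕ) (t : Fin n → Fin m) :
    P ((fun ω i => τ i k ω) ⁻¹' {t}) = (m : ℝ≥0∞)⁻¹ ^ n := by
  have hset : (fun ω i => τ i k ω) ⁻¹' {t}
      = ⋂ q ∈ Finset.univ.image fun i : Fin n => (i, k, true),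
        (fun ω => if q.2.2 then τ q.1 q.2.1 ω else s q.1 q.2.1 ω) ⁻¹' {t q.1} := by
    ext ω
    simp [funext_iff]
  rw [hset, hindep.meas_biInter fun q _ => ⟨{t q.1}, trivial, rfl⟩,
    Finset.prod_image fun _ _ _ _ h => by simpa using h]
  simp [Set.preimage, hτunif]

end Filtration

section RandomEstimator

variable {Ω : Type*} {n m p : ℕ} {f : Fin n → Fin m → EuclideanSpace ℝ (Fin p) → ℝ}
  {X : Fin n → Ω → EuclideanSpace ℝ (Fin p)} {Z : Fin n → Fin m → Ω → EuclideanSpace ℝ (Fin p)}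

theorem measurable_sagaGrad {mΩ : MeasurableSpace Ω}
    (hcont : ∀ i j, Continuous (gradient (f i j))) (hX : ∀ i, Measurable (X i))
    (hZ : ∀ i j, Measurable (Z i j)) (i : Fin n) (j : Fin m) :
    Measurable fun ω => sagaGrad f (fun i => X i ω) (fun i j => Z i j ω) i j := by
  have hgrad : ∀ j {V : Ω → EuclideanSpace ℝ (Fin p)}, Measurable V →
      Measurable fun ω => gradient (f i j) (V ω) := fun j _ hV => (hcont i j).measurable.comp hV
  exact ((hgrad j (hX i)).sub (hgrad j (hZ i j))).add
    ((Finset.measurable_fun_sum _ fun j' _ => hgrad j' (hZ i j')).fun_const_smul _)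

theorem measurable_sagaGradAvg {mΩ : MeasurableSpace Ω}
    (hcont : ∀ i j, Continuous (gradient (f i j))) (hX : ∀ i, Measurable (X i))
    (hZ : ∀ i j, Measurable (Z i j)) (t : Fin n → Fin m) :
    Measurable fun ω => sagaGradAvg f (fun i => X i ω) (fun i j => Z i j ω) t :=
  (Finset.measurable_fun_sum _ fun i _ => measurable_sagaGrad hcont hX hZ i (t i)).fun_const_smul _

theorem memLp_sagaGradAvg [MeasurableSpace Ω] {P : Measure Ω} [IsFiniteMeasure P] {K : NNReal}
    (hlip : ∀ i j, LipschitzWith K (gradient (f i j))) (hX : ∀ i, MemLp (X i) 2 P)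
    (hZ : ∀ i j, MemLp (Z i j) 2 P) (t : Fin n → Fin m) :
    MemLp (fun ω => sagaGradAvg f (fun i => X i ω) (fun i j => Z i j ω) t) 2 P := by
  have hgrad : ∀ i j {V : Ω → EuclideanSpace ℝ (Fin p)}, MemLp V 2 P →
      MemLp (fun ω => gradient (f i j) (V ω)) 2 P :=
    fun i j _ hV => (hlip i j).memLp_comp_of_isFiniteMeasure hV
  have hnode : ∀ i j, MemLp (fun ω => sagaGrad f (fun i => X i ω) (fun i j => Z i j ω) i j) 2 P :=
    fun i j => ((hgrad i j (hX i)).sub (hgrad i j (hZ i j))).add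
      ((memLp_finsetSum Finset.univ fun j' _ => hgrad i j' (hZ i j')).const_smul (m : ℝ)⁻¹)
  exact (memLp_finsetSum Finset.univ fun i _ => hnode i (t i)).const_smul (n : ℝ)⁻¹

end RandomEstimator

theorem measurable_apply_comp {Ω β γ : Type*} {mΩ : MeasurableSpace Ω} [Countable β]
    [MeasurableSpace γ] {g : β → Ω → γ} (hg : ∀ b, Measurable (g b)) {T : Ω → β}
    (hT : ∀ b, MeasurableSet (T ⁻¹' {b})) : Measurable fun ω => g (T ω) ω := by
  intro S hS
  have h : (fun ω => g (T ω) ω) ⁻¹' S = ⋃ b, T ⁻¹' {b} ∩ g b ⁻¹' S := by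
    ext ω
    simp
  rw [h]
  exact MeasurableSet.iUnion fun b => (hT b).inter (hg b hS)

section Iterates

variable {Ω : Type*} {n m p : ℕ} {f : Fin n → Fin m → EuclideanSpace ℝ (Fin p) → ℝ}
  {τ s : Fin n → ℕ → Ω → Fin m} {w : Matrix (Fin n) (Fin n) ℝ} {α : ℝ}
  {x y g : ℕ → Fin n → Ω → EuclideanSpace ℝ (Fin p)}
  {z : ℕ → Fin n → Fin m → Ω → EuclideanSpace ℝ (Fin p)}

theorem measurableSet_tau_preimage {t k : ℕ} (ht : t < k) (i : Fin n) (b : Fin m) :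
    MeasurableSet[gtFilt τ s k] (τ i t ⁻¹' {b}) :=
  comap_tau_le_gtFilt τ s ht i _ ⟨{b}, trivial, rfl⟩

theorem measurableSet_s_preimage {t k : ℕ} (ht : t < k) (i : Fin n) (b : Fin m) :
    MeasurableSet[gtFilt τ s k] (s i t ⁻¹' {b}) :=
  comap_s_le_gtFilt τ s ht i _ ⟨{b}, trivial, rfl⟩

theorem measurable_gtsaga_g {mF : MeasurableSpace Ω}
    (hcont : ∀ i j, Continuous (gradient (f i j)))
    (hgdef : ∀ k i ω, g k i ω =
      gradient (f i (τ i k ω)) (x k i ω) - gradient (f i (τ i k ω)) (z k i (τ i k ω) ω)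
        + (m : ℝ)⁻¹ • ∑ j, gradient (f i j) (z k i j ω))
    {k : ℕ} (hτ : ∀ i b, MeasurableSet (τ i k ⁻¹' {b})) (hx : ∀ i, Measurable (x k i))
    (hz : ∀ i j, Measurable (z k i j)) (i : Fin n) : Measurable (g k i) := by
  rw [funext (hgdef k i)]
  exact measurable_apply_comp (fun j => measurable_sagaGrad hcont hx hz i j) (hτ i)

theorem gtsaga_iterates_measurable (hcont : ∀ i j, Continuous (gradient (f i j)))
    {x0 : EuclideanSpace ℝ (Fin p)}
    (hx0 : ∀ i ω, x 0 i ω = x0)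
    (hz0 : ∀ i j ω, z 0 i j ω = x0)
    (hy0 : ∀ i ω, y 0 i ω = 0)
    (hgdef : ∀ k i ω, g k i ω =
      gradient (f i (τ i k ω)) (x k i ω) - gradient (f i (τ i k ω)) (z k i (τ i k ω) ω)
        + (m : ℝ)⁻¹ • ∑ j, gradient (f i j) (z k i j ω))
    (hydef : ∀ k i ω, y (k + 1) i ω =
      ∑ r, w i r • (y k r ω + g k r ω - (if k = 0 then 0 else g (k - 1) r ω)))
    (hxdef : ∀ k i ω, x (k + 1) i ω = ∑ r, w i r • (x k r ω - α • y (k + 1) r ω))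
    (hzdef : ∀ k i j ω, z (k + 1) i j ω = if j = s i k ω then x k i ω else z k i j ω)
    (k : ℕ) :
    (∀ i, Measurable[gtFilt τ s k] (x k i)) ∧ (∀ i, Measurable[gtFilt τ s k] (y k i))
      ∧ (∀ i j, Measurable[gtFilt τ s k] (z k i j)) := by
  induction k using Nat.strong_induction_on with
  | _ k ih =>
  rcases k with _ | k
  · simp only [funext (hx0 _), funext (hy0 _), funext (hz0 _ _)]
    exact ⟨fun _ => measurable_const, fun _ => measurable_const, fun _ _ => measurable_const⟩
  have hmono := gtFilt_mono τ s (Nat.le_succ k)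
  obtain ⟨hx, hy, hz⟩ := ih k (Nat.lt_succ_self k)
  have hg : ∀ i, Measurable[gtFilt τ s (k + 1)] (g k i) :=
    measurable_gtsaga_g hcont hgdef (measurableSet_tau_preimage (Nat.lt_succ_self k))
      (fun i => (hx i).mono hmono le_rfl) (fun i j => (hz i j).mono hmono le_rfl)
  have hgprev : ∀ r, Measurable[gtFilt τ s (k + 1)]
      fun ω => if k = 0 then 0 else g (k - 1) r ω := by
    rcases k with _ | k
    · exact fun _ => measurable_const
    obtain ⟨hx', -, hz'⟩ := ih k (by omega)
    have hmono' := gtFilt_mono τ s (Nat.le_succ k)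
    exact fun r => (measurable_gtsaga_g hcont hgdef
      (measurableSet_tau_preimage (Nat.lt_succ_self k)) (fun i => (hx' i).mono hmono' le_rfl)
      (fun i j => (hz' i j).mono hmono' le_rfl) r).mono hmono le_rfl
  have hy' : ∀ i, Measurable[gtFilt τ s (k + 1)] (y (k + 1) i) := fun i => by
    rw [funext (hydef k i)]
    exact Finset.measurable_fun_sum _ fun r _ =>
      ((((hy r).mono hmono le_rfl).add (hg r)).sub (hgprev r)).fun_const_smul _
  refine ⟨fun i => ?_, hy', fun i j => ?_⟩
  · rw [funext (hxdef k i)]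
    exact Finset.measurable_fun_sum _ fun r _ =>
      (((hx r).mono hmono le_rfl).sub ((hy' r).const_smul α)).fun_const_smul _
  · rw [funext (hzdef k i j)]
    refine Measurable.ite ?_ ((hx i).mono hmono le_rfl) ((hz i j).mono hmono le_rfl)
    exact measurableSet_s_preimage (Nat.lt_succ_self k) i j |>.congr (by ext; simp [eq_comm])

end Iterates

section Averaging

variable {Ω : Type*} {n m p : ℕ} {w : Matrix (Fin n) (Fin n) ℝ} {α : ℝ}
  {x y g : ℕ → Fin n → Ω → EuclideanSpace ℝ (Fin p)}

theorem sum_sum_smul_of_sum_col_eq_one {E : Type*} [AddCommGroup E] [Module ℝ E]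
    (hcol : ∀ r, ∑ i, w i r = 1) (h : Fin n → E) : ∑ i, ∑ r, w i r • h r = ∑ r, h r := by
  rw [Finset.sum_comm]
  simp [← Finset.sum_smul, hcol]

theorem sum_y_succ_eq_sum_g (hcol : ∀ r, ∑ i, w i r = 1) (hy0 : ∀ i ω, y 0 i ω = 0)
    (hydef : ∀ k i ω, y (k + 1) i ω =
      ∑ r, w i r • (y k r ω + g k r ω - (if k = 0 then 0 else g (k - 1) r ω)))
    (k : ℕ) (ω : Ω) : ∑ i, y (k + 1) i ω = ∑ i, g k i ω := by
  induction k with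
  | zero => simp [hydef, sum_sum_smul_of_sum_col_eq_one hcol, hy0]
  | succ k ih =>
    simp only [hydef (k + 1), sum_sum_smul_of_sum_col_eq_one hcol, Finset.sum_sub_distrib,
      Finset.sum_add_distrib, ih, Nat.add_one_ne_zero, if_false, Nat.add_sub_cancel]
    abel

theorem blockAvg_x_succ (hcol : ∀ r, ∑ i, w i r = 1) (hy0 : ∀ i ω, y 0 i ω = 0)
    (hydef : ∀ k i ω, y (k + 1) i ω =
      ∑ r, w i r • (y k r ω + g k r ω - (if k = 0 then 0 else g (k - 1) r ω)))
    (hxdef : ∀ k i ω, x (k + 1) i ω = ∑ r, w i r • (x k r ω - α • y (k + 1) r ω))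
    (k : ℕ) (ω : Ω) :
    blockAvg (fun i => x (k + 1) i ω)
      = blockAvg (fun i => x k i ω) - α • blockAvg (fun i => g k i ω) := by
  simp only [blockAvg, hxdef, sum_sum_smul_of_sum_col_eq_one hcol, Finset.sum_sub_distrib,
    ← Finset.smul_sum, sum_y_succ_eq_sum_g hcol hy0 hydef, smul_sub, smul_comm α]

end Averaging

theorem condExp_fglob_blockAvg_succ_ae_eq
    {Ω : Type*} [MeasurableSpace Ω] {P : Measure Ω} [IsProbabilityMeasure P]
    {n m p : ℕ} {K : NNReal} {f : Fin n → Fin m → EuclideanSpace ℝ (Fin p) → ℝ}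
    (hdiff : ∀ i j, Differentiable ℝ (f i j))
    (hlip : ∀ i j, LipschitzWith K (gradient (f i j)))
    {w : Matrix (Fin n) (Fin n) ℝ} (hcol : ∀ r, ∑ i, w i r = 1)
    {τ s : Fin n → ℕ → Ω → Fin m}
    (hτmeas : ∀ i k, Measurable (τ i k)) (hsmeas : ∀ i k, Measurable (s i k))
    (hτunif : ∀ i k j, P {ω | τ i k ω = j} = (m : ℝ≥0∞)⁻¹)
    (hindep : iIndepFun
      (fun (q : Fin n × ℕ × Bool) ω => if q.2.2 then τ q.1 q.2.1 ω else s q.1 q.2.1 ω) P)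
    {α : ℝ} {x y g : ℕ → Fin n → Ω → EuclideanSpace ℝ (Fin p)}
    {z : ℕ → Fin n → Fin m → Ω → EuclideanSpace ℝ (Fin p)} {x0 : EuclideanSpace ℝ (Fin p)}
    (hx0 : ∀ i ω, x 0 i ω = x0)
    (hz0 : ∀ i j ω, z 0 i j ω = x0)
    (hy0 : ∀ i ω, y 0 i ω = 0)
    (hgdef : ∀ k i ω, g k i ω =
      gradient (f i (τ i k ω)) (x k i ω) - gradient (f i (τ i k ω)) (z k i (τ i k ω) ω)
        + (m : ℝ)⁻¹ • ∑ j, gradient (f i j) (z k i j ω))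
    (hydef : ∀ k i ω, y (k + 1) i ω =
      ∑ r, w i r • (y k r ω + g k r ω - (if k = 0 then 0 else g (k - 1) r ω)))
    (hxdef : ∀ k i ω, x (k + 1) i ω = ∑ r, w i r • (x k r ω - α • y (k + 1) r ω))
    (hzdef : ∀ k i j ω, z (k + 1) i j ω = if j = s i k ω then x k i ω else z k i j ω)
    (hxL2 : ∀ k i, MemLp (x k i) 2 P)
    (hzL2 : ∀ k i j, MemLp (z k i j) 2 P) (k : ℕ) :
    P[fun ω => fglob f (blockAvg fun i => x (k + 1) i ω) | gtFilt τ s k]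
      =ᵐ[P] fun ω => ((m : ℝ) ^ n)⁻¹ * ∑ t, fglob f (blockAvg (fun i => x k i ω)
        - α • sagaGradAvg f (fun i => x k i ω) (fun i j => z k i j ω) t) := by
  set T : Ω → Fin n → Fin m := fun ω i => τ i k ω
  set Φ : (Fin n → Fin m) → Ω → ℝ := fun t ω => fglob f (blockAvg (fun i => x k i ω)
    - α • sagaGradAvg f (fun i => x k i ω) (fun i j => z k i j ω) t)
  have hcont : ∀ i j, Continuous (gradient (f i j)) := fun i j => (hlip i j).continuous
  obtain ⟨hx, -, hz⟩ := gtsaga_iterates_measurable hcont hx0 hz0 hy0 hgdef hydef hxdef hzdef k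
  have hΦ : ∀ t, StronglyMeasurable[gtFilt τ s k] (Φ t) := fun t =>
    ((differentiable_fglob hdiff).continuous.measurable.comp
      (((Finset.measurable_fun_sum _ fun i _ => hx i).fun_const_smul _).sub
        ((measurable_sagaGradAvg hcont hx hz t).fun_const_smul α))).stronglyMeasurable
  have hint : ∀ t, Integrable (Φ t) P := fun t =>
    integrable_comp_of_lipschitzWith_gradient (differentiable_fglob hdiff)
      (lipschitzWith_gradient_fglob hdiff hlip)
      (((memLp_finsetSum Finset.univ fun i _ => hxL2 k i).const_smul (n : ℝ)⁻¹).sub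
        ((memLp_sagaGradAvg hlip (hxL2 k) (hzL2 k) t).const_smul α))
  have hT : ∀ t, MeasurableSet[⨆ i, MeasurableSpace.comap (τ i k) ⊤] (T ⁻¹' {t}) := by
    intro t
    have h : T ⁻¹' {t} = ⋂ i, τ i k ⁻¹' {t i} := by
      ext ω
      simp [T, funext_iff]
    rw [h]
    exact MeasurableSet.iInter fun i =>
      le_iSup (fun i => MeasurableSpace.comap (τ i k) ⊤) i _ ⟨{t i}, trivial, rfl⟩
  have hstep : (fun ω => fglob f (blockAvg fun i => x (k + 1) i ω)) = fun ω => Φ (T ω) ω := by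
    funext ω
    have hgavg : blockAvg (fun i => g k i ω) = sagaGradAvg f (fun i => x k i ω)
        (fun i j => z k i j ω) (T ω) := by
      simp only [blockAvg, sagaGradAvg, sagaGrad, hgdef, T]
    rw [blockAvg_x_succ hcol hy0 hydef hxdef, hgavg]
  rw [hstep]
  filter_upwards [condExp_apply_indep_eq_sum (gtFilt_le τ s hτmeas hsmeas k)
    (iSup_le fun i => (hτmeas i k).comap_le)
    (indep_iSup_comap_tau_gtFilt τ s hτmeas hsmeas hindep k) hT hΦ hint] with ω hω
  rw [hω, Finset.mul_sum]
  refine Finset.sum_congr rfl fun t _ => ?_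
  rw [measureReal_def, measure_tau_preimage_singleton τ s hindep hτunif]
  congr 1
  simp

theorem gtsaga_descent_inequality_general
    {Ω : Type} [MeasurableSpace Ω] (P : Measure Ω) [IsProbabilityMeasure P]
    {n m p : ℕ} (hn : 1 ≤ n) (hm : 1 ≤ m)
    (L : ℝ) (hL : 0 < L)
    (f : Fin n → Fin m → EuclideanSpace ℝ (Fin p) → ℝ)
    (hdiff : ∀ i j, Differentiable ℝ (f i j))
    (hlip : ∀ i j, LipschitzWith L.toNNReal (gradient (f i j)))
    (w : Matrix (Fin n) (Fin n) ℝ)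
    (hcol : ∀ r, ∑ i, w i r = 1)
    (τ s : Fin n → ℕ → Ω → Fin m)
    (hτmeas : ∀ i k, Measurable (τ i k)) (hsmeas : ∀ i k, Measurable (s i k))
    (hτunif : ∀ i k j, P {ω | τ i k ω = j} = (m : ℝ≥0∞)⁻¹)
    (hindep : iIndepFun
      (fun (q : Fin n × ℕ × Bool) ω => if q.2.2 then τ q.1 q.2.1 ω else s q.1 q.2.1 ω) P)
    (α : ℝ) (hα0 : 0 < α)
    (x y g : ℕ → Fin n → Ω → EuclideanSpace ℝ (Fin p))
    (z : ℕ → Fin n → Fin m → Ω → EuclideanSpace ℝ (Fin p))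
    (x0 : EuclideanSpace ℝ (Fin p))
    (hx0 : ∀ i ω, x 0 i ω = x0)
    (hz0 : ∀ i j ω, z 0 i j ω = x0)
    (hy0 : ∀ i ω, y 0 i ω = 0)
    (hgdef : ∀ k i ω, g k i ω =
      gradient (f i (τ i k ω)) (x k i ω) - gradient (f i (τ i k ω)) (z k i (τ i k ω) ω)
        + (m : ℝ)⁻¹ • ∑ j, gradient (f i j) (z k i j ω))
    (hydef : ∀ k i ω, y (k + 1) i ω =
      ∑ r, w i r • (y k r ω + g k r ω - (if k = 0 then 0 else g (k - 1) r ω)))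
    (hxdef : ∀ k i ω, x (k + 1) i ω = ∑ r, w i r • (x k r ω - α • y (k + 1) r ω))
    (hzdef : ∀ k i j ω, z (k + 1) i j ω = if j = s i k ω then x k i ω else z k i j ω)
    (hxL2 : ∀ k i, MemLp (x k i) 2 P)
    (hzL2 : ∀ k i j, MemLp (z k i j) 2 P)
    (hα2 : α ≤ 1 / (2 * L)) (k : ℕ) :
    ∀ᵐ ω ∂P,
      (P[fun ω' => fglob f (blockAvg (fun i => x (k + 1) i ω')) | gtFilt τ s k]) ω
        ≤ fglob f (blockAvg (fun i => x k i ω))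
          - α / 2 * ‖gradient (fglob f) (blockAvg (fun i => x k i ω))‖ ^ 2
          - α / 4 * ‖gradfbar f (fun i => x k i ω)‖ ^ 2
          + α * L ^ 2 / n * consSq (fun i => x k i ω)
          + α ^ 2 * L ^ 3 / n * tAux (blockAvg (fun i => x k i ω)) (fun i j => z k i j ω) := by
  have hK : (L.toNNReal : ℝ) = L := Real.coe_toNNReal L hL.le
  have hαL : 2 * α * L.toNNReal ≤ 1 := by
    rw [hK]
    rw [le_div_iff₀ (by positivity)] at hα2
    linarith
  filter_upwards [condExp_fglob_blockAvg_succ_ae_eq hdiff hlip hcol hτmeas hsmeas hτunif hindep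
    hx0 hz0 hy0 hgdef hydef hxdef hzdef hxL2 hzL2 k] with ω hω
  rw [hω]
  simpa only [hK] using mean_fglob_sub_smul_sagaGradAvg_le (fun i => x k i ω)
    (fun i j => z k i j ω) hn hm hdiff hlip hα0.le hαL

/-- GT-SAGA: descent inequality for the global function at the averaged iterate. -/
theorem gtsaga_descent_inequality
    {Ω : Type} [MeasurableSpace Ω] (P : Measure Ω) [IsProbabilityMeasure P]
    {n m p : ℕ} (hn : 1 ≤ n) (hm : 1 ≤ m)
    (L : ℝ) (hL : 0 < L)
    (f : Fin n → Fin m → EuclideanSpace ℝ (Fin p) → ℝ)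
    (hdiff : ∀ i j, Differentiable ℝ (f i j))
    (hlip : ∀ i j, LipschitzWith L.toNNReal (gradient (f i j)))
    (hFbdd : BddBelow (Set.range (fglob f)))
    (w : Matrix (Fin n) (Fin n) ℝ)
    (hrow : ∀ i, ∑ r, w i r = 1) (hcol : ∀ r, ∑ i, w i r = 1)
    (lam : ℝ) (hlam : lam = secondSV w) (hlam0 : 0 ≤ lam) (hlam1 : lam < 1)
    (τ s : Fin n → ℕ → Ω → Fin m)
    (hτmeas : ∀ i k, Measurable (τ i k)) (hsmeas : ∀ i k, Measurable (s i k))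
    (hτunif : ∀ i k j, P {ω | τ i k ω = j} = (m : ℝ≥0∞)⁻¹)
    (hsunif : ∀ i k j, P {ω | s i k ω = j} = (m : ℝ≥0∞)⁻¹)
    (hindep : iIndepFun
      (fun (q : Fin n × ℕ × Bool) ω => if q.2.2 then τ q.1 q.2.1 ω else s q.1 q.2.1 ω) P)
    (α : ℝ) (hα0 : 0 < α)
    (x y g : ℕ → Fin n → Ω → EuclideanSpace ℝ (Fin p))
    (z : ℕ → Fin n → Fin m → Ω → EuclideanSpace ℝ (Fin p))
    (x0 : EuclideanSpace ℝ (Fin p))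
    (hx0 : ∀ i ω, x 0 i ω = x0)
    (hz0 : ∀ i j ω, z 0 i j ω = x0)
    (hy0 : ∀ i ω, y 0 i ω = 0)
    (hgdef : ∀ k i ω, g k i ω =
      gradient (f i (τ i k ω)) (x k i ω) - gradient (f i (τ i k ω)) (z k i (τ i k ω) ω)
        + (m : ℝ)⁻¹ • ∑ j, gradient (f i j) (z k i j ω))
    (hydef : ∀ k i ω, y (k + 1) i ω =
      ∑ r, w i r • (y k r ω + g k r ω - (if k = 0 then 0 else g (k - 1) r ω)))
    (hxdef : ∀ k i ω, x (k + 1) i ω = ∑ r, w i r • (x k r ω - α • y (k + 1) r ω))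
    (hzdef : ∀ k i j ω, z (k + 1) i j ω = if j = s i k ω then x k i ω else z k i j ω)
    (hxL2 : ∀ k i, MemLp (x k i) 2 P)
    (hyL2 : ∀ k i, MemLp (y k i) 2 P)
    (hgL2 : ∀ k i, MemLp (g k i) 2 P)
    (hzL2 : ∀ k i j, MemLp (z k i j) 2 P)
    (hα2 : α ≤ 1 / (2 * L)) (k : ℕ) :
    ∀ᵐ ω ∂P,
      (P[fun ω' => fglob f (blockAvg (fun i => x (k + 1) i ω')) | gtFilt τ s k]) ω
        ≤ fglob f (blockAvg (fun i => x k i ω))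
          - α / 2 * ‖gradient (fglob f) (blockAvg (fun i => x k i ω))‖ ^ 2
          - α / 4 * ‖gradfbar f (fun i => x k i ω)‖ ^ 2
          + α * L ^ 2 / n * consSq (fun i => x k i ω)
          + α ^ 2 * L ^ 3 / n * tAux (blockAvg (fun i => x k i ω)) (fun i j => z k i j ω) :=
  gtsaga_descent_inequality_general P hn hm L hL f hdiff hlip w hcol τ s hτmeas hsmeas hτunif hindep
    α hα0 x y g z x0 hx0 hz0 hy0 hgdef hydef hxdef hzdef hxL2 hzL2 hα2 k

end
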